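/- For every z ∈ ℝ and σ > 0, if ε is a standard normal random variable then P(z + σ·ε > 0) = Φ(z/σ), and consequently the maximiser of π ↦ π·z + σ·φ(Φ⁻¹(π)) over π ∈ [0,1] is π* = Φ(z/σ). -/

import Mathlib

/-!
Writing `z = σ a`, the event is `{ε > -a}`, whose probability is `Φ a` because `φ` is even.
For the maximisation substitute `p = Φ t` on `(0, 1)`: the objective becomes `σ (a Φ t + φ t)`,
whose derivative `σ (a - t) φ t` changes sign from `+` to `-` at `t = a`. The endpoint values
`0` and `σ a` are the limits of the same function as `t → -∞` and `t → +∞`, so they do not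
exceed its value at `a` either.
-/

open MeasureTheory ProbabilityTheory

noncomputable section

/-- Standard normal density `φ`. -/
def stdGaussPDF (y : ℝ) : ℝ := (Real.sqrt (2 * Real.pi))⁻¹ * Real.exp (-(y ^ 2) / 2)

/-- Standard normal CDF `Φ`. -/
def stdGaussCDF (z : ℝ) : ℝ := ∫ y in Set.Iic z, stdGaussPDF y

/-- Quantile function `Φ⁻¹`. -/
def stdGaussQuantile : ℝ → ℝ := Function.invFun stdGaussCDF

/-- Probit regulariser `H_Φ(p) = φ(Φ⁻¹(p))` on `(0,1)`, extended by `0` at the endpoints. -/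
def probitReg (p : ℝ) : ℝ :=
  if p ≤ 0 ∨ 1 ≤ p then 0 else stdGaussPDF (stdGaussQuantile p)

open Filter Set Topology

lemma stdGaussPDF_eq_gaussianPDFReal : stdGaussPDF = gaussianPDFReal 0 1 := by
  ext x
  simp [stdGaussPDF, gaussianPDFReal, neg_div]

lemma stdGaussPDF_pos (x : ℝ) : 0 < stdGaussPDF x := by
  rw [stdGaussPDF_eq_gaussianPDFReal]
  exact gaussianPDFReal_pos 0 1 x one_ne_zero

lemma stdGaussPDF_neg (x : ℝ) : stdGaussPDF (-x) = stdGaussPDF x := by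
  simp [stdGaussPDF]

lemma continuous_stdGaussPDF : Continuous stdGaussPDF := by
  unfold stdGaussPDF
  fun_prop

lemma integrable_stdGaussPDF : Integrable stdGaussPDF := by
  rw [stdGaussPDF_eq_gaussianPDFReal]
  exact integrable_gaussianPDFReal 0 1

lemma hasDerivAt_stdGaussPDF (t : ℝ) : HasDerivAt stdGaussPDF (-t * stdGaussPDF t) t := by
  have hexp : HasDerivAt (fun u : ℝ => -(u ^ 2) / 2) (-t) t :=
    ((hasDerivAt_pow 2 t).neg.div_const 2).congr_deriv (by push_cast; ring)
  exact (hexp.exp.const_mul (Real.sqrt (2 * Real.pi))⁻¹).congr_deriv (by rw [stdGaussPDF]; ring)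

lemma tendsto_stdGaussPDF_atTop : Tendsto stdGaussPDF atTop (𝓝 0) := by
  have hexp : Tendsto (fun t : ℝ => -(t ^ 2) / 2) atTop atBot :=
    (tendsto_neg_atTop_atBot.comp (tendsto_pow_atTop two_ne_zero)).atBot_div_const two_pos
  have := (Real.tendsto_exp_atBot.comp hexp).const_mul (Real.sqrt (2 * Real.pi))⁻¹
  rwa [mul_zero] at this

lemma tendsto_stdGaussPDF_atBot : Tendsto stdGaussPDF atBot (𝓝 0) := by
  simpa [Function.comp_def, stdGaussPDF_neg] using
    tendsto_stdGaussPDF_atTop.comp tendsto_neg_atBot_atTop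

lemma gaussianReal_toReal_eq_setIntegral (s : Set ℝ) :
    (gaussianReal 0 1 s).toReal = ∫ x in s, stdGaussPDF x := by
  rw [stdGaussPDF_eq_gaussianPDFReal, gaussianReal_apply_eq_integral 0 one_ne_zero,
    ENNReal.toReal_ofReal (setIntegral_nonneg_of_ae ?_)]
  exact ae_of_all _ (gaussianPDFReal_nonneg 0 1)

lemma stdGaussCDF_eq_cdf : stdGaussCDF = cdf (gaussianReal 0 1) := by
  ext t
  rw [cdf_eq_real, measureReal_def, gaussianReal_toReal_eq_setIntegral, stdGaussCDF]

lemma gaussianReal_Ioi_neg_toReal (a : ℝ) :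
    (gaussianReal 0 1 (Ioi (-a))).toReal = stdGaussCDF a := by
  rw [gaussianReal_toReal_eq_setIntegral, ← integral_comp_neg_Iic]
  simp only [stdGaussPDF_neg, stdGaussCDF]

lemma hasDerivAt_stdGaussCDF (t : ℝ) : HasDerivAt stdGaussCDF (stdGaussPDF t) t := by
  have hFTC : HasDerivAt (fun u => ∫ x in (0 : ℝ)..u, stdGaussPDF x) (stdGaussPDF t) t :=
    intervalIntegral.integral_hasDerivAt_right integrable_stdGaussPDF.intervalIntegrable
      (continuous_stdGaussPDF.stronglyMeasurableAtFilter _ _) continuous_stdGaussPDF.continuousAt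
  refine (hFTC.const_add (stdGaussCDF 0)).congr_of_eventuallyEq (Eventually.of_forall fun u => ?_)
  show stdGaussCDF u = stdGaussCDF 0 + ∫ x in (0 : ℝ)..u, stdGaussPDF x
  rw [← intervalIntegral.integral_Iic_sub_Iic integrable_stdGaussPDF.integrableOn
    integrable_stdGaussPDF.integrableOn, stdGaussCDF, stdGaussCDF]
  ring

lemma continuous_stdGaussCDF : Continuous stdGaussCDF :=
  continuous_iff_continuousAt.2 fun t => (hasDerivAt_stdGaussCDF t).continuousAt

lemma strictMono_stdGaussCDF : StrictMono stdGaussCDF :=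
  strictMono_of_hasDerivAt_pos hasDerivAt_stdGaussCDF stdGaussPDF_pos

lemma tendsto_stdGaussCDF_atBot : Tendsto stdGaussCDF atBot (𝓝 0) :=
  stdGaussCDF_eq_cdf ▸ tendsto_cdf_atBot _

lemma tendsto_stdGaussCDF_atTop : Tendsto stdGaussCDF atTop (𝓝 1) :=
  stdGaussCDF_eq_cdf ▸ tendsto_cdf_atTop _

lemma stdGaussCDF_mem_Ioo (t : ℝ) : stdGaussCDF t ∈ Ioo 0 1 := by
  refine ⟨?_, ?_⟩
  · calc 0 ≤ stdGaussCDF (t - 1) := stdGaussCDF_eq_cdf ▸ cdf_nonneg _ _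
      _ < stdGaussCDF t := strictMono_stdGaussCDF (by linarith)
  · calc stdGaussCDF t < stdGaussCDF (t + 1) := strictMono_stdGaussCDF (by linarith)
      _ ≤ 1 := stdGaussCDF_eq_cdf ▸ cdf_le_one _ _

lemma Ioo_subset_range_stdGaussCDF : Ioo 0 1 ⊆ range stdGaussCDF := by
  rw [← image_univ]
  exact isPreconnected_univ.intermediate_value_Ioo (principal_univ ▸ le_top)
    (principal_univ ▸ le_top)
    continuous_stdGaussCDF.continuousOn tendsto_stdGaussCDF_atBot tendsto_stdGaussCDF_atTop

lemma stdGaussQuantile_stdGaussCDF (t : ℝ) : stdGaussQuantile (stdGaussCDF t) = t :=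
  Function.leftInverse_invFun strictMono_stdGaussCDF.injective t

lemma stdGaussCDF_stdGaussQuantile {p : ℝ} (hp : p ∈ Ioo 0 1) :
    stdGaussCDF (stdGaussQuantile p) = p :=
  Function.invFun_eq (Ioo_subset_range_stdGaussCDF hp)

lemma probitReg_stdGaussCDF (t : ℝ) : probitReg (stdGaussCDF t) = stdGaussPDF t := by
  obtain ⟨h0, h1⟩ := stdGaussCDF_mem_Ioo t
  rw [probitReg, if_neg (by push Not; exact ⟨h0, h1⟩), stdGaussQuantile_stdGaussCDF]

lemma isMaxOn_stdGaussCDF_mul_add_stdGaussPDF (a : ℝ) :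
    IsMaxOn (fun t => stdGaussCDF t * a + stdGaussPDF t) univ a := by
  have hderiv (t : ℝ) : HasDerivAt (fun t => stdGaussCDF t * a + stdGaussPDF t)
      ((a - t) * stdGaussPDF t) t :=
    (((hasDerivAt_stdGaussCDF t).mul_const a).add (hasDerivAt_stdGaussPDF t)).congr_deriv
      (by ring)
  have hdiff : Differentiable ℝ (fun t => stdGaussCDF t * a + stdGaussPDF t) :=
    fun t => (hderiv t).differentiableAt
  refine isMaxOn_univ_of_deriv hdiff.continuous.continuousAt hdiff.differentiableOn
    hdiff.differentiableOn (fun t ht => ?_) (fun t ht => ?_) <;> rw [(hderiv t).deriv]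
  · exact mul_nonneg (sub_nonneg.2 (le_of_lt ht)) (stdGaussPDF_pos t).le
  · exact mul_nonpos_of_nonpos_of_nonneg (sub_nonpos.2 (le_of_lt ht)) (stdGaussPDF_pos t).le

lemma isMaxOn_mul_add_probitReg (a : ℝ) :
    IsMaxOn (fun p => p * a + probitReg p) (Icc 0 1) (stdGaussCDF a) := by
  have hmax (t : ℝ) : stdGaussCDF t * a + stdGaussPDF t ≤ stdGaussCDF a * a + stdGaussPDF a :=
    isMaxOn_stdGaussCDF_mul_add_stdGaussPDF a (mem_univ t)
  intro p ⟨hp0, hp1⟩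
  show p * a + probitReg p ≤ stdGaussCDF a * a + probitReg (stdGaussCDF a)
  rw [probitReg_stdGaussCDF]
  rcases hp0.eq_or_lt with rfl | hp0
  · have hlim := (tendsto_stdGaussCDF_atBot.mul_const a).add tendsto_stdGaussPDF_atBot
    simpa [probitReg] using le_of_tendsto' hlim hmax
  rcases hp1.eq_or_lt with rfl | hp1
  · have hlim := (tendsto_stdGaussCDF_atTop.mul_const a).add tendsto_stdGaussPDF_atTop
    simpa [probitReg] using le_of_tendsto' hlim hmax
  obtain ⟨t, rfl⟩ := Ioo_subset_range_stdGaussCDF ⟨hp0, hp1⟩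
  rw [probitReg_stdGaussCDF]
  exact hmax t

/-- For a standard normal `ε`: `P(z + σ·ε > 0) = Φ(z/σ)`, and consequently `Φ(z/σ)` maximises
`p ↦ p·z + σ·φ(Φ⁻¹(p))` over `[0,1]`. -/
theorem gaussian_gate_weighted (z σ : ℝ) (hσ : 0 < σ) :
    (gaussianReal 0 1 {y : ℝ | 0 < z + σ * y}).toReal = stdGaussCDF (z / σ) ∧
    stdGaussCDF (z / σ) ∈ Set.Icc (0 : ℝ) 1 ∧
    IsMaxOn (fun p : ℝ => p * z + σ * probitReg p) (Set.Icc (0 : ℝ) 1)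
      (stdGaussCDF (z / σ)) := by
  obtain ⟨a, rfl⟩ : ∃ a, z = σ * a := ⟨z / σ, (mul_div_cancel₀ z hσ.ne').symm⟩
  rw [mul_div_cancel_left₀ a hσ.ne']
  have hset : {y : ℝ | 0 < σ * a + σ * y} = Ioi (-a) := by
    ext y
    rw [mem_ofPred_eq, mem_Ioi, neg_lt_iff_pos_add, ← mul_add, mul_pos_iff_of_pos_left hσ,
      add_comm]
  refine ⟨hset ▸ gaussianReal_Ioi_neg_toReal a, Ioo_subset_Icc_self (stdGaussCDF_mem_Ioo a),
    fun p hp => ?_⟩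
  have hmax := mul_le_mul_of_nonneg_left (isMaxOn_mul_add_probitReg a hp) hσ.le
  simp only [mem_ofPred_eq] at hmax ⊢
  linarith

end
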